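/- The element N(x_{1121222} − x_{1122212}) + 3·x₂·(x_{112212} − x_{112122}) of S(gl_N)^{⊗2} is nonzero for all sufficiently large N. -/

import Mathlib

/-!
Evaluating `S(gl_N)^{⊗2}` at a pair of matrices `(A, B)` (each `e_{ij}` in slot `s` goes to the
`(i, j)` entry of the `s`-th matrix) sends the necklace element `x_μ` to the trace of the word in
`A, B` spelled by `μ`. For `A = [[0,0,0],[0,0,1],[0,1,0]]` and `B = [[0,0,1],[1,0,0],[0,0,1]]`,
padded by zeros to size `N`, the traces of the five words are `1, 0, 1, 0, 1`, so the element
evaluates to `N - 3`.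
-/

open MvPolynomial

/-- The necklace element `x_μ` of a 2-colored necklace `μ` of order `n` in `S(gl_N)^{⊗2}`,
the latter modelled as the polynomial algebra on two copies of the basis `e_{ij}` of `gl_N`:
variable `(s, i, j)` is the generator `e_{ij}` in tensor slot `s`. -/
noncomputable def neck (F : Type) [Field F] (N n : ℕ) (hn : 0 < n) (μ : ℕ → Fin 2) :
    MvPolynomial (Fin 2 × Fin N × Fin N) F :=
  ∑ i : Fin n → Fin N, ∏ m : Fin n,
    X (μ m.val, i m, i ⟨(m.val + 1) % n, Nat.mod_lt _ hn⟩)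

theorem Fin.sum_fin_succ_pi {ι M : Type*} [Fintype ι] [AddCommMonoid M] {n : ℕ}
    (g : (Fin (n + 1) → ι) → M) : ∑ t, g t = ∑ a, ∑ t : Fin n → ι, g (Fin.cons a t) := by
  rw [← (Fin.consEquiv fun _ => ι).sum_comp, Fintype.sum_prod_type]
  rfl

namespace Matrix

section Trace

variable {l o R : Type*} [Fintype l] [Fintype o]

theorem trace_fromBlocks [AddCommMonoid R] (A : Matrix l l R) (B : Matrix l o R)
    (C : Matrix o l R) (D : Matrix o o R) : trace (fromBlocks A B C D) = trace A + trace D := by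
  simp [trace, Fintype.sum_sum_type]

theorem trace_reindex [AddCommMonoid R] (e : l ≃ o) (A : Matrix l l R) :
    trace (reindex e e A) = trace A := by
  simpa [trace] using e.symm.sum_comp fun i => A i i

variable [DecidableEq l] [DecidableEq o] [Semiring R]

theorem list_prod_ofFn_fromBlocks_zero {n : ℕ} (A : Fin (n + 1) → Matrix l l R) :
    (List.ofFn fun m => fromBlocks (A m) 0 0 (0 : Matrix o o R)).prod =
      fromBlocks (List.ofFn A).prod 0 0 0 := by
  induction n with
  | zero => simp
  | succ n ih =>
    rw [List.ofFn_succ, List.prod_cons, ih, fromBlocks_multiply, List.ofFn_succ (f := A),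
      List.prod_cons]
    simp

end Trace

section Words

variable {ι R : Type*} [Fintype ι] [DecidableEq ι] [CommSemiring R]

theorem list_prod_ofFn_apply {n : ℕ} (M : Fin (n + 1) → Matrix ι ι R) (a b : ι) :
    (List.ofFn M).prod a b = ∑ t : Fin n → ι,
      ∏ m, M m ((Fin.cons a t : Fin (n + 1) → ι) m) ((Fin.snoc t b : Fin (n + 1) → ι) m) := by
  induction n generalizing a with
  | zero => simp [Fin.snoc]
  | succ n ih =>
    rw [List.ofFn_succ, List.prod_cons, mul_apply, Fin.sum_fin_succ_pi]
    simp only [ih, Finset.mul_sum, Fin.prod_univ_succ (n := n + 1), ← Fin.cons_snoc_eq_snoc_cons,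
      Fin.cons_zero, Fin.cons_succ]

theorem trace_list_prod_ofFn {n : ℕ} (M : Fin (n + 1) → Matrix ι ι R) :
    trace (List.ofFn M).prod = ∑ i : Fin (n + 1) → ι, ∏ m, M m (i m) (i (m + 1)) := by
  have cons_apply_add_one (a : ι) (t : Fin n → ι) (m : Fin (n + 1)) :
      (Fin.cons a t : Fin (n + 1) → ι) (m + 1) = (Fin.snoc t a : Fin (n + 1) → ι) m := by
    induction m using Fin.lastCases with
    | last => simp
    | cast j => simp
  simp only [trace, diag, list_prod_ofFn_apply, Fin.sum_fin_succ_pi, cons_apply_add_one]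

end Words

variable {R : Type*} [CommSemiring R]

def padZero {m : ℕ} (A : Matrix (Fin m) (Fin m) R) (k : ℕ) : Matrix (Fin (m + k)) (Fin (m + k)) R :=
  reindex finSumFinEquiv finSumFinEquiv (fromBlocks A 0 0 0)

theorem trace_list_prod_ofFn_padZero {m n : ℕ} (A : Fin (n + 1) → Matrix (Fin m) (Fin m) R)
    (k : ℕ) : trace (List.ofFn fun i => padZero (A i) k).prod = trace (List.ofFn A).prod := by
  have hpad : (fun i => padZero (A i) k) =
      reindexAlgEquiv R R finSumFinEquiv ∘ fun i => fromBlocks (A i) 0 0 0 := rfl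
  rw [hpad, ← List.map_ofFn, ← map_list_prod, coe_reindexAlgEquiv, trace_reindex,
    list_prod_ofFn_fromBlocks_zero, trace_fromBlocks, trace_zero, add_zero]

end Matrix

open Matrix

section Evaluation

variable {F : Type} [Field F]

theorem eval_neck {N n : ℕ} (hn : 0 < n) (μ : ℕ → Fin 2) (M : Fin 2 → Matrix (Fin N) (Fin N) F) :
    eval (fun p => M p.1 p.2.1 p.2.2) (neck F N n hn μ) =
      trace (List.ofFn fun m : Fin n => M (μ m)).prod := by
  obtain ⟨n, rfl⟩ : ∃ n', n = n' + 1 := ⟨n - 1, by omega⟩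
  have succ_mod (m : Fin (n + 1)) :
      (⟨(m.val + 1) % (n + 1), Nat.mod_lt _ hn⟩ : Fin (n + 1)) = m + 1 := by
    ext
    simp [Fin.val_add]
  simp only [neck, map_sum, map_prod, eval_X, trace_list_prod_ofFn, succ_mod]

theorem eval_padZero_neck {m k n : ℕ} (hn : 0 < n) (μ : ℕ → Fin 2)
    (M : Fin 2 → Matrix (Fin m) (Fin m) F) :
    eval (fun p => padZero (M p.1) k p.2.1 p.2.2) (neck F (m + k) n hn μ) =
      trace (List.ofFn fun i : Fin n => M (μ i)).prod := by
  obtain ⟨n, rfl⟩ : ∃ n', n = n' + 1 := ⟨n - 1, by omega⟩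
  exact (eval_neck hn μ fun s => padZero (M s) k).trans (trace_list_prod_ofFn_padZero _ k)

end Evaluation

def testMatrices (R : Type*) [Semiring R] : Fin 2 → Matrix (Fin 3) (Fin 3) R :=
  ![!![0, 0, 0; 0, 0, 1; 0, 1, 0], !![0, 0, 1; 1, 0, 0; 0, 0, 1]]

/-- For all sufficiently large `N`, the element
`N·(x_{1121222} − x_{1122212}) + 3·x₂·(x_{112212} − x_{112122})` of `S(gl_N)^{⊗2}`
is nonzero. -/
theorem psi_heptapus_nonzero (F : Type) [Field F] [CharZero F] :
    ∃ N₀ : ℕ, ∀ N : ℕ, N₀ ≤ N →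
      (N : MvPolynomial (Fin 2 × Fin N × Fin N) F) *
          (neck F N 7 (by omega) (fun m => ![0,0,1,0,1,1,1] ⟨m % 7, Nat.mod_lt _ (by omega)⟩) -
           neck F N 7 (by omega) (fun m => ![0,0,1,1,1,0,1] ⟨m % 7, Nat.mod_lt _ (by omega)⟩)) +
        3 * neck F N 1 (by omega) (fun _ => 1) *
          (neck F N 6 (by omega) (fun m => ![0,0,1,1,0,1] ⟨m % 6, Nat.mod_lt _ (by omega)⟩) -
           neck F N 6 (by omega) (fun m => ![0,0,1,0,1,1] ⟨m % 6, Nat.mod_lt _ (by omega)⟩)) ≠ 0 := by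
  refine ⟨4, fun N hN hzero => ?_⟩
  obtain ⟨k, rfl⟩ : ∃ k, N = 3 + k := ⟨N - 3, by omega⟩
  have hval := congrArg (eval fun p => padZero (testMatrices F p.1) k p.2.1 p.2.2) hzero
  simp only [map_add, map_mul, map_sub, map_natCast, map_ofNat, map_zero, eval_padZero_neck] at hval
  simp [testMatrices, List.ofFn_succ, trace_fin_three] at hval
  omega
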